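/- arXiv:1705.07642 — 3 statements merged into one kernel-verified Lean document; each statement's English description precedes it below -/
import Mathlib

section
/- Let P_X be a probability measure on 𝒳, P_Z a probability measure on 𝒵, G : 𝒵 → 𝒳 measurable, and let P_G be the pushforward of P_Z under G. Then for any measurable cost c : 𝒳 × 𝒳 → [0,∞], the optimal transport cost W_c(P_X, P_G) = inf over couplings Γ of (P_X, P_G) of E_Γ[c(X,Y)] equals the optimal transport cost between P_X and P_Z with cost function c_G(x,z) := c(x, G(z)), i.e., W_c(P_X, P_G) = inf over couplings P of (P_X, P_Z) of E_P[c(X, G(Z))]. -/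
/-! A coupling `Γ` of `(P_X, G_* P_Z)` lifts to a coupling of `(P_X, P_Z)`: disintegrate `Γ` along
its second coordinate, `Γ = (G_* P_Z) ⊗ κ` with `κ` a kernel to `𝒳`, and take `P_Z ⊗ (κ ∘ G)`.
Hence the couplings of `(P_X, G_* P_Z)` are exactly the pushforwards of the couplings of
`(P_X, P_Z)` under `id × G`, and the change of variables `∫ c d((id × G)_* P) = ∫ c ∘ (id × G) dP`
identifies the two infima. -/

open MeasureTheory
open scoped ENNReal

/-- The set of couplings of two measures. -/
def couplings {α β : Type*} [MeasurableSpace α] [MeasurableSpace β]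
    (μ : Measure α) (ν : Measure β) : Set (Measure (α × β)) :=
  {γ | γ.map Prod.fst = μ ∧ γ.map Prod.snd = ν}

section

open ProbabilityTheory

variable {α β γ : Type*} [MeasurableSpace α] [MeasurableSpace β] [MeasurableSpace γ]

lemma MeasureTheory.Measure.map_prodMap_compProd_comap (μ : Measure β) [SFinite μ]
    (κ : Kernel γ α) [IsSFiniteKernel κ] {f : β → γ} (hf : Measurable f) :
    (μ ⊗ₘ κ.comap f hf).map (Prod.map f id) = μ.map f ⊗ₘ κ := by
  ext s hs
  rw [Measure.map_apply (hf.prodMap measurable_id) hs,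
    Measure.compProd_apply (hf.prodMap measurable_id hs), Measure.compProd_apply hs,
    lintegral_map (Kernel.measurable_kernel_prodMk_left hs) hf]
  rfl

lemma MeasureTheory.Measure.exists_map_snd_eq_and_map_prodMap_eq
    [StandardBorelSpace α] [Nonempty α] {Γ : Measure (α × γ)} [IsFiniteMeasure Γ]
    {ν : Measure β} {f : β → γ} (hf : Measurable f) (hΓ : Γ.map Prod.snd = ν.map f) :
    ∃ P : Measure (α × β), P.map Prod.snd = ν ∧ P.map (Prod.map id f) = Γ := by
  have : IsFiniteMeasure (ν.map f) := hΓ ▸ inferInstance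
  have : IsFiniteMeasure ν := Measure.isFiniteMeasure_of_map hf.aemeasurable
  set ρ := Γ.map Prod.swap
  set κ := ρ.condKernel
  have hρ : ρ.fst = ν.map f := by
    rw [Measure.fst, Measure.map_map measurable_fst measurable_swap]
    exact hΓ
  refine ⟨(ν ⊗ₘ κ.comap f hf).map Prod.swap, ?_, ?_⟩
  · rw [Measure.map_map measurable_snd measurable_swap]
    exact Measure.fst_compProd _ _
  · calc ((ν ⊗ₘ κ.comap f hf).map Prod.swap).map (Prod.map id f)
        _ = ((ν ⊗ₘ κ.comap f hf).map (Prod.map f id)).map Prod.swap := by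
          rw [Measure.map_map (measurable_id.prodMap hf) measurable_swap,
            Measure.map_map measurable_swap (hf.prodMap measurable_id)]
          rfl
        _ = Γ := by
          rw [Measure.map_prodMap_compProd_comap, ← hρ, ρ.disintegrate κ,
            Measure.map_map measurable_swap measurable_swap, Prod.swap_swap_eq, Measure.map_id]

lemma map_prodMap_mem_couplings {μ : Measure α} {ν : Measure β} {f : β → γ} (hf : Measurable f)
    {P : Measure (α × β)} (hP : P ∈ couplings μ ν) :
    P.map (Prod.map id f) ∈ couplings μ (ν.map f) := by
  obtain ⟨hfst, hsnd⟩ := hP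
  constructor
  · rw [Measure.map_map measurable_fst (measurable_id.prodMap hf)]
    exact hfst
  · rw [Measure.map_map measurable_snd (measurable_id.prodMap hf), ← hsnd,
      Measure.map_map hf measurable_snd]
    rfl

lemma image_map_prodMap_couplings [StandardBorelSpace α] [Nonempty α]
    (μ : Measure α) [IsFiniteMeasure μ] (ν : Measure β) {f : β → γ} (hf : Measurable f) :
    (fun P : Measure (α × β) ↦ P.map (Prod.map id f)) '' couplings μ ν =
      couplings μ (ν.map f) := by
  refine Set.Subset.antisymm (Set.image_subset_iff.2 fun P ↦ map_prodMap_mem_couplings hf) ?_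
  rintro Γ ⟨hfst, hsnd⟩
  have : IsFiniteMeasure (Γ.map Prod.fst) := hfst ▸ inferInstance
  have : IsFiniteMeasure Γ := Measure.isFiniteMeasure_of_map measurable_fst.aemeasurable
  obtain ⟨P, hPsnd, hPΓ⟩ := Measure.exists_map_snd_eq_and_map_prodMap_eq hf hsnd
  refine ⟨P, ⟨?_, hPsnd⟩, hPΓ⟩
  rw [← hfst, ← hPΓ, Measure.map_map measurable_fst (measurable_id.prodMap hf)]
  rfl

end

theorem ot_reparametrization_general
    {𝒳 𝒵 : Type*} [MeasurableSpace 𝒳] [MeasurableSpace 𝒵]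
    [StandardBorelSpace 𝒳] [Nonempty 𝒳]
    (PX : Measure 𝒳) (PZ : Measure 𝒵)
    [IsProbabilityMeasure PX]
    (G : 𝒵 → 𝒳) (hG : Measurable G)
    (c : 𝒳 × 𝒳 → ℝ≥0∞) (hc : Measurable c) :
    sInf ((fun γ : Measure (𝒳 × 𝒳) => ∫⁻ p, c p ∂γ) ''
        couplings PX (PZ.map G))
      =
    sInf ((fun γ : Measure (𝒳 × 𝒵) => ∫⁻ p, c (p.1, G p.2) ∂γ) ''
        couplings PX PZ) := by
  rw [← image_map_prodMap_couplings PX PZ hG, Set.image_image]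
  simp only [lintegral_map hc (measurable_id.prodMap hG)]
  rfl

/-- Reparametrization of optimal transport: for `P_G = G_* P_Z`,
`W_c(P_X, P_G)` equals the optimal transport cost between `P_X` and `P_Z`
for the cost `c_G(x, z) = c(x, G z)`. -/
theorem ot_reparametrization
    {𝒳 𝒵 : Type*} [MeasurableSpace 𝒳] [MeasurableSpace 𝒵]
    [StandardBorelSpace 𝒳] [StandardBorelSpace 𝒵] [Nonempty 𝒳] [Nonempty 𝒵]
    (PX : Measure 𝒳) (PZ : Measure 𝒵)
    [IsProbabilityMeasure PX] [IsProbabilityMeasure PZ]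
    (G : 𝒵 → 𝒳) (hG : Measurable G)
    (c : 𝒳 × 𝒳 → ℝ≥0∞) (hc : Measurable c) :
    sInf ((fun γ : Measure (𝒳 × 𝒳) => ∫⁻ p, c p ∂γ) ''
        couplings PX (PZ.map G))
      =
    sInf ((fun γ : Measure (𝒳 × 𝒵) => ∫⁻ p, c (p.1, G p.2) ∂γ) ''
        couplings PX PZ) :=
  ot_reparametrization_general PX PZ G hG c hc
end

section
/- Let P, Q be probability measures on a measurable space and define D_GAN(P,Q) = sup over measurable T : 𝒳 → (0,1) of E_P[log T] + E_Q[log(1−T)]. Then D_GAN(P,Q) = 2·D_JS(P,Q) − log 4, where D_JS is the Jensen-Shannon divergence, and in particular D_GAN(P,Q) ≤ 2·D_JS(P,Q) − log 4 with the supremum attained at T*(x) = dP/d(P+Q)(x) when densities exist. -/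
open MeasureTheory

/-- Kullback-Leibler divergence between densities `p, q` w.r.t. a reference measure `ν`. -/
noncomputable def klD {𝒳 : Type*} [MeasurableSpace 𝒳] (ν : Measure 𝒳)
    (p q : 𝒳 → ℝ) : ℝ :=
  ∫ x, p x * Real.log (p x / q x) ∂ν

/-- Jensen-Shannon divergence between densities `p, q` w.r.t. `ν`. -/
noncomputable def jsD {𝒳 : Type*} [MeasurableSpace 𝒳] (ν : Measure 𝒳)
    (p q : 𝒳 → ℝ) : ℝ :=
  (1 / 2) * klD ν p (fun x => (p x + q x) / 2)
    + (1 / 2) * klD ν q (fun x => (p x + q x) / 2)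

open Real Set

/-! The supremum is taken pointwise: for `a, b > 0`, `t ↦ a log t + b log (1 - t)` is maximised
on `(0, 1)` at `s = a / (a + b)`, because bounding `log t` and `log (1 - t)` by their tangent
lines at `s` and `1 - s` adds `(a + b)(t - s) + (a + b)(s - t) = 0`. So `T* = p / (p + q)` is
optimal, and as `T* = (p / m) / 2` and `1 - T* = (q / m) / 2` with `m = (p + q) / 2`, its value
is `KL(p ‖ m) + KL(q ‖ m) - (∫ p + ∫ q) log 2 = 2 D_JS - log 4`. -/

lemma Real.log_le_log_add_sub_div {u v : ℝ} (hu : 0 < u) (hv : 0 < v) :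
    log u ≤ log v + (u - v) / v := by
  have h := log_le_sub_one_of_pos (div_pos hu hv)
  rw [log_div hu.ne' hv.ne'] at h
  rw [sub_div, div_self hv.ne']
  linarith

lemma div_add_mem_Ioo {a b : ℝ} (ha : 0 < a) (hb : 0 < b) : a / (a + b) ∈ Ioo (0 : ℝ) 1 :=
  ⟨by positivity, (div_lt_one (by positivity)).2 (by linarith)⟩

lemma one_sub_div_add {a b : ℝ} (ha : 0 < a) (hb : 0 < b) : 1 - a / (a + b) = b / (a + b) := by
  field_simp
  ring

lemma mul_log_add_mul_log_one_sub_le {a b t : ℝ} (ha : 0 < a) (hb : 0 < b)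
    (ht : t ∈ Ioo (0 : ℝ) 1) :
    a * log t + b * log (1 - t) ≤ a * log (a / (a + b)) + b * log (1 - a / (a + b)) := by
  obtain ⟨ht0, ht1⟩ := ht
  rw [one_sub_div_add ha hb]
  calc a * log t + b * log (1 - t)
      ≤ a * (log (a / (a + b)) + (t - a / (a + b)) / (a / (a + b)))
        + b * (log (b / (a + b)) + ((1 - t) - b / (a + b)) / (b / (a + b))) := by
        gcongr
        · exact log_le_log_add_sub_div ht0 (by positivity)
        · exact log_le_log_add_sub_div (by linarith) (by positivity)
    _ = a * log (a / (a + b)) + b * log (b / (a + b)) := by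
        field_simp
        ring

lemma mul_log_div_add_mul_log_one_sub_div {a b : ℝ} (ha : 0 < a) (hb : 0 < b) :
    a * log (a / (a + b)) + b * log (1 - a / (a + b))
      = a * log (a / ((a + b) / 2)) + b * log (b / ((a + b) / 2)) - (a + b) * log 2 := by
  rw [one_sub_div_add ha hb]
  have halve (c : ℝ) (hc : 0 < c) : log (c / ((a + b) / 2)) = log (c / (a + b)) + log 2 := by
    rw [div_div_eq_mul_div, mul_div_right_comm, log_mul (by positivity) two_ne_zero]
  rw [halve a ha, halve b hb]
  ring

section Integral

variable {𝒳 : Type*} [MeasurableSpace 𝒳]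

noncomputable def ganObjective (ν : Measure 𝒳) (p q : 𝒳 → ℝ) (T : 𝒳 → ℝ) : ℝ :=
  ∫ x, p x * log (T x) + q x * log (1 - T x) ∂ν

lemma ganObjective_optimal_eq_two_mul_jsD_sub_log_four (ν : Measure 𝒳) {p q : 𝒳 → ℝ}
    (hppos : ∀ x, 0 < p x) (hqpos : ∀ x, 0 < q x)
    (hp1 : ∫ x, p x ∂ν = 1) (hq1 : ∫ x, q x ∂ν = 1)
    (hjs1 : Integrable (fun x => p x * log (p x / ((p x + q x) / 2))) ν)
    (hjs2 : Integrable (fun x => q x * log (q x / ((p x + q x) / 2))) ν) :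
    ganObjective ν p q (fun x => p x / (p x + q x)) = 2 * jsD ν p q - log 4 := by
  have hp : Integrable p ν := Integrable.of_integral_ne_zero (by simp [hp1])
  have hq : Integrable q ν := Integrable.of_integral_ne_zero (by simp [hq1])
  have hkl_int : Integrable (fun x => p x * log (p x / ((p x + q x) / 2))
      + q x * log (q x / ((p x + q x) / 2))) ν := hjs1.add hjs2
  have hmass_int : Integrable (fun x => (p x + q x) * log 2) ν := (hp.add hq).mul_const _
  have hmass : ∫ x, (p x + q x) * log 2 ∂ν = 2 * log 2 := by
    rw [integral_mul_const, integral_add hp hq, hp1, hq1]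
    ring
  have hlog4 : log 4 = 2 * log 2 := by
    rw [show (4 : ℝ) = 2 ^ 2 by norm_num, log_pow, Nat.cast_ofNat]
  calc ganObjective ν p q (fun x => p x / (p x + q x))
      = ∫ x, p x * log (p x / ((p x + q x) / 2)) + q x * log (q x / ((p x + q x) / 2))
          - (p x + q x) * log 2 ∂ν :=
        integral_congr_ae (ae_of_all _ fun x =>
          mul_log_div_add_mul_log_one_sub_div (hppos x) (hqpos x))
    _ = 2 * jsD ν p q - log 4 := by
        rw [integral_sub hkl_int hmass_int, integral_add hjs1 hjs2, hmass, hlog4, jsD, klD, klD]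
        ring

end Integral

/-- The GAN objective `D_GAN(P,Q) = sup_T E_P[log T] + E_Q[log(1−T)]` over discriminators
`T : 𝒳 → (0,1)` equals `2·D_JS(P,Q) − log 4`, with the supremum attained at
`T* = p/(p+q)`. -/
theorem gan_objective_eq_js
    {𝒳 : Type*} [MeasurableSpace 𝒳] (ν : Measure 𝒳)
    (p q : 𝒳 → ℝ) (hp : Measurable p) (hq : Measurable q)
    (hppos : ∀ x, 0 < p x) (hqpos : ∀ x, 0 < q x)
    (hp1 : ∫ x, p x ∂ν = 1) (hq1 : ∫ x, q x ∂ν = 1)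
    (hint : ∀ T : 𝒳 → ℝ, Measurable T → (∀ x, T x ∈ Set.Ioo (0 : ℝ) 1) →
      Integrable (fun x => p x * Real.log (T x) + q x * Real.log (1 - T x)) ν)
    (hjs1 : Integrable (fun x => p x * Real.log (p x / ((p x + q x) / 2))) ν)
    (hjs2 : Integrable (fun x => q x * Real.log (q x / ((p x + q x) / 2))) ν) :
    (⨆ T : {T : 𝒳 → ℝ // Measurable T ∧ ∀ x, T x ∈ Set.Ioo (0 : ℝ) 1},
        ∫ x, p x * Real.log (T.1 x) + q x * Real.log (1 - T.1 x) ∂ν)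
      = 2 * jsD ν p q - Real.log 4
    ∧ (∫ x, p x * Real.log (p x / (p x + q x))
          + q x * Real.log (1 - p x / (p x + q x)) ∂ν)
        = 2 * jsD ν p q - Real.log 4 := by
  set D : Set (𝒳 → ℝ) := {T | Measurable T ∧ ∀ x, T x ∈ Ioo (0 : ℝ) 1}
  have hopt_mem : (fun x => p x / (p x + q x)) ∈ D :=
    ⟨hp.div (hp.add hq), fun x => div_add_mem_Ioo (hppos x) (hqpos x)⟩
  have hmax : IsMaxOn (ganObjective ν p q) D (fun x => p x / (p x + q x)) := fun T hT =>
    integral_mono (hint T hT.1 hT.2) (hint _ hopt_mem.1 hopt_mem.2) fun x =>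
      mul_log_add_mul_log_one_sub_le (hppos x) (hqpos x) (hT.2 x)
  have hval := ganObjective_optimal_eq_two_mul_jsD_sub_log_four ν hppos hqpos hp1 hq1 hjs1 hjs2
  exact ⟨(hmax.iSup_eq hopt_mem).trans hval, hval⟩
end

section
/- Let P_X, P_Z be probability measures on Polish spaces 𝒳, 𝒵 and G : 𝒵 → 𝒳 measurable. For any Markov kernel Q from 𝒳 to 𝒵 whose aggregated posterior Q_Z (the law of Z when X ∼ P_X, Z ∼ Q(·|X)) equals P_Z, the joint law of (X, G(Z)) is a coupling of P_X and P_G := G_* P_Z, and hence E_{P_X}E_{Q(Z|X)}[c(X, G(Z))] ≥ W_c(P_X, P_G) for any measurable cost c ≥ 0. Conversely, the infimum over such constrained Q of this expectation equals W_c(P_X, P_G). -/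
open MeasureTheory ProbabilityTheory
open scoped ENNReal

namespace ProbabilityTheory

variable {α β γ : Type*} [MeasurableSpace α] [MeasurableSpace β] [MeasurableSpace γ]

lemma compProd_mem_couplings (μ : Measure α) [SFinite μ] (κ : Kernel α β) [IsMarkovKernel κ] :
    μ ⊗ₘ κ ∈ couplings μ (κ ∘ₘ μ) :=
  ⟨Measure.fst_compProd μ κ, Measure.snd_compProd μ κ⟩

lemma isFiniteMeasure_of_mem_couplings {μ : Measure α} [IsFiniteMeasure μ] {ν : Measure β}
    {π : Measure (α × β)} (hπ : π ∈ couplings μ ν) : IsFiniteMeasure π := by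
  have : IsFiniteMeasure (π.map Prod.fst) := hπ.1 ▸ inferInstance
  exact Measure.isFiniteMeasure_of_map measurable_fst.aemeasurable

lemma compProd_condKernel_of_mem_couplings [StandardBorelSpace β] [Nonempty β]
    {μ : Measure α} {ν : Measure β} {π : Measure (α × β)} [IsFiniteMeasure π]
    (hπ : π ∈ couplings μ ν) : μ ⊗ₘ π.condKernel = π := by
  rw [← hπ.1]
  exact π.disintegrate π.condKernel

lemma Kernel.comp_ae_eq_comp {μ : Measure α} {η : Kernel α β} {κ κ' : Kernel β γ}
    (h : κ =ᵐ[η ∘ₘ μ] κ') : κ ∘ₖ η =ᵐ[μ] κ' ∘ₖ η := by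
  filter_upwards [Measure.ae_ae_of_ae_comp h] with x hx
  rw [Kernel.comp_apply, Kernel.comp_apply]
  exact Measure.comp_congr hx

lemma lintegral_map_compProd_prodMap {μ : Measure α} [SFinite μ] {κ : Kernel α β}
    [IsSFiniteKernel κ] {f : β → γ} (hf : Measurable f) {c : α × γ → ℝ≥0∞} (hc : Measurable c) :
    ∫⁻ p, c p ∂((μ ⊗ₘ κ).map (Prod.map id f)) = ∫⁻ x, ∫⁻ y, c (x, f y) ∂κ x ∂μ := by
  rw [lintegral_map hc (measurable_id.prodMap hf)]
  exact Measure.lintegral_compProd (hc.comp (measurable_id.prodMap hf))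

lemma map_compProd_prodMap_mem_couplings {μ : Measure α} [SFinite μ] {ν : Measure β}
    {Q : Kernel α β} [IsMarkovKernel Q] (hQ : Q ∘ₘ μ = ν) {f : β → γ} (hf : Measurable f) :
    (μ ⊗ₘ Q).map (Prod.map id f) ∈ couplings μ (ν.map f) := by
  have := Kernel.IsMarkovKernel.map Q hf
  rw [← Measure.compProd_map hf, ← hQ, Measure.map_comp _ _ hf]
  exact compProd_mem_couplings μ (Q.map f)

section StandardBorel

variable [StandardBorelSpace α] [Nonempty α] [StandardBorelSpace β] [Nonempty β]

lemma condDistrib_id_map_ae_eq_id (μ : Measure β) [IsFiniteMeasure μ] {f : β → α}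
    (hf : Measurable f) : (condDistrib id f μ).map f =ᵐ[μ.map f] Kernel.id :=
  (condDistrib_comp f aemeasurable_id hf).symm.trans (condDistrib_self f)

lemma exists_kernel_map_compProd_eq_of_mem_couplings {μ : Measure α} [IsFiniteMeasure μ]
    {ν : Measure β} [IsFiniteMeasure ν] {f : β → α} (hf : Measurable f)
    {π : Measure (α × α)} (hπ : π ∈ couplings μ (ν.map f)) :
    ∃ Q : Kernel α β, IsMarkovKernel Q ∧ Q ∘ₘ μ = ν ∧ (μ ⊗ₘ Q).map (Prod.map id f) = π := by
  have := isFiniteMeasure_of_mem_couplings hπ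
  set η := π.condKernel
  set κ := condDistrib id f ν
  have hπη : μ ⊗ₘ η = π := compProd_condKernel_of_mem_couplings hπ
  have hη : η ∘ₘ μ = ν.map f := by rw [← Measure.snd_compProd, hπη]; exact hπ.2
  refine ⟨κ ∘ₖ η, inferInstance, ?_, ?_⟩
  · rw [← Measure.comp_assoc, hη, condDistrib_comp_map hf.aemeasurable aemeasurable_id,
      Measure.map_id]
  · have hκ : κ.map f =ᵐ[η ∘ₘ μ] Kernel.id := hη ▸ condDistrib_id_map_ae_eq_id ν hf
    rw [← Measure.compProd_map hf, Kernel.map_comp,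
      Measure.compProd_congr (Kernel.comp_ae_eq_comp hκ), Kernel.id_comp, hπη]

end StandardBorel

end ProbabilityTheory

/-- For any Markov kernel `Q` whose aggregated posterior equals `P_Z`, the law of
`(X, G(Z))` is a coupling of `P_X` and `P_G = G_* P_Z`, hence its cost dominates
`W_c(P_X, P_G)`; conversely, the infimum over all such constrained `Q` equals
`W_c(P_X, P_G)`. -/
theorem constrained_encoder_formulation
    {𝒳 𝒵 : Type*} [MeasurableSpace 𝒳] [MeasurableSpace 𝒵]
    [StandardBorelSpace 𝒳] [StandardBorelSpace 𝒵] [Nonempty 𝒳] [Nonempty 𝒵]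
    (PX : Measure 𝒳) (PZ : Measure 𝒵)
    [IsProbabilityMeasure PX] [IsProbabilityMeasure PZ]
    (G : 𝒵 → 𝒳) (hG : Measurable G)
    (c : 𝒳 × 𝒳 → ℝ≥0∞) (hc : Measurable c) :
    (∀ Q : Kernel 𝒳 𝒵, ∀ _ : IsMarkovKernel Q, PX.bind (fun x => Q x) = PZ →
      ((PX ⊗ₘ Q).map (fun p => (p.1, G p.2)) ∈ couplings PX (PZ.map G)
      ∧ sInf ((fun γ : Measure (𝒳 × 𝒳) => ∫⁻ p, c p ∂γ) '' couplings PX (PZ.map G))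
          ≤ ∫⁻ x, ∫⁻ z, c (x, G z) ∂(Q x) ∂PX))
    ∧ (⨅ Q : {Q : Kernel 𝒳 𝒵 // IsMarkovKernel Q ∧ PX.bind (fun x => Q x) = PZ},
          ∫⁻ x, ∫⁻ z, c (x, G z) ∂(Q.1 x) ∂PX)
        = sInf ((fun γ : Measure (𝒳 × 𝒳) => ∫⁻ p, c p ∂γ) '' couplings PX (PZ.map G)) := by
  have lower_bound : ∀ Q : Kernel 𝒳 𝒵, ∀ _ : IsMarkovKernel Q, Q ∘ₘ PX = PZ →
      (PX ⊗ₘ Q).map (Prod.map id G) ∈ couplings PX (PZ.map G)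
      ∧ sInf ((fun γ : Measure (𝒳 × 𝒳) => ∫⁻ p, c p ∂γ) '' couplings PX (PZ.map G))
          ≤ ∫⁻ x, ∫⁻ z, c (x, G z) ∂(Q x) ∂PX := by
    intro Q _ hQ
    have hmem := map_compProd_prodMap_mem_couplings hQ hG
    exact ⟨hmem, sInf_le ⟨_, hmem, lintegral_map_compProd_prodMap hG hc⟩⟩
  refine ⟨lower_bound, le_antisymm ?_ (le_iInf fun Q => (lower_bound Q.1 Q.2.1 Q.2.2).2)⟩
  refine le_sInf ?_
  rintro _ ⟨π, hπ, rfl⟩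
  obtain ⟨Q, hQ, hQPX, hQπ⟩ := exists_kernel_map_compProd_eq_of_mem_couplings hG hπ
  subst hQπ
  exact iInf_le_of_le ⟨Q, hQ, hQPX⟩ (lintegral_map_compProd_prodMap hG hc).ge
end
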